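/- For m ≥ 3 and n = 2^m, let a₁ ∈ F₂ⁿ be the weight-2 vector corresponding to the Boolean function Y₁Y₂⋯Y_{m-1} (i.e., with ones exactly in the last two coordinates under the standard ordering). Then the coset RM(m-2,m) + a₁ contains exactly (1/n)·[C(n, n/2) − C(n/2, n/4)] balanced words. -/

import Mathlib

/-- Weight of a Boolean function: number of inputs mapped to 1. -/
def wtF {m : ℕ} (f : (Fin m → ZMod 2) → ZMod 2) : ℕ :=
  (Finset.univ.filter fun x => f x = 1).card

/-- The Reed–Muller code RM(r,m): the span of the monomial functions of degree ≤ r,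
i.e. truth tables of Boolean functions in m variables of degree at most r. -/
def RM (r m : ℕ) : Submodule (ZMod 2) ((Fin m → ZMod 2) → ZMod 2) :=
  Submodule.span (ZMod 2)
    {f | ∃ S : Finset (Fin m), S.card ≤ r ∧ f = fun x => ∏ i ∈ S, x i}

/-!
In the algebraic normal form of `v : 𝔽₂^m → 𝔽₂`, the coefficient of the degree-`m` monomial is
`∑ₓ v x` and that of `∏_{i ≠ j} xᵢ` is `∑ₓ v x - (∑ₓ v x • x)ⱼ`. A balanced word has even weight,
so it lies in `RM(m-2,m) + a₁` iff the points of its support sum to `eₘ`, which is that sum for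
`a₁`. The number `N` of `2^(m-1)`-subsets `S ⊆ 𝔽₂^m` with `∑ S = u ≠ 0` is computed with the
characters `y ↦ (-1)^(a⬝y)`: `2^m N = ∑ₐ (-1)^(a⬝u) ∑_S ∏_{y ∈ S} (-1)^(a⬝y)`. The term `a = 0`
is `C(2^m, 2^(m-1))`. For `a ≠ 0` the form `a⬝y` is balanced, so the inner sum is a coefficient
of `(X² - 1)^(2^(m-1))`, namely `C(2^(m-1), 2^(m-2))`, and `∑_{a ≠ 0} (-1)^(a⬝u) = -1`.
-/

open Finset Matrix

namespace ReedMuller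

lemma zmod_two_eq_zero_or_eq_one (u : ZMod 2) : u = 0 ∨ u = 1 := by
  revert u; decide

section Indicator

variable (α : Type*) [Fintype α] [DecidableEq α]

def indicatorEquiv : Finset α ≃ (α → ZMod 2) where
  toFun S a := if a ∈ S then 1 else 0
  invFun x := {a | x a = 1}
  left_inv S := by ext; simp
  right_inv x := by
    funext a
    rcases zmod_two_eq_zero_or_eq_one (x a) with h | h <;> simp [h]

variable {α}

@[simp]
lemma indicatorEquiv_apply (S : Finset α) (a : α) :
    indicatorEquiv α S a = if a ∈ S then 1 else 0 := rfl

lemma sum_indicatorEquiv (S : Finset α) : ∑ a, indicatorEquiv α S a = #S := by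
  simp

end Indicator

variable {m : ℕ}

def monomialFun (T : Finset (Fin m)) : (Fin m → ZMod 2) → ZMod 2 := fun x => ∏ i ∈ T, x i

lemma monomialFun_indicatorEquiv (T U : Finset (Fin m)) :
    monomialFun T (indicatorEquiv _ U) = if T ⊆ U then 1 else 0 := by
  simp [monomialFun, Finset.prod_boole, subset_iff]

/-- The coefficient of `∏ i ∈ T, x i` in the algebraic normal form of `v` (Möbius inversion on
the Boolean lattice). -/
def anfCoeff (T : Finset (Fin m)) : ((Fin m → ZMod 2) → ZMod 2) →ₗ[ZMod 2] ZMod 2 where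
  toFun v := ∑ U ∈ T.powerset, v (indicatorEquiv _ U)
  map_add' _ _ := sum_add_distrib
  map_smul' _ _ := (mul_sum ..).symm

lemma anfCoeff_apply (T : Finset (Fin m)) (v : (Fin m → ZMod 2) → ZMod 2) :
    anfCoeff T v = ∑ U ∈ T.powerset, v (indicatorEquiv _ U) := rfl

lemma natCast_card_Icc_zmod_two (S T : Finset (Fin m)) :
    ((#(Icc S T) : ℕ) : ZMod 2) = if S = T then 1 else 0 := by
  split_ifs with h
  · simp [h]
  by_cases hST : S ⊆ T
  · have hlt : #S < #T := card_lt_card (ssubset_of_subset_of_ne hST h)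
    rw [card_Icc_finset hST, Nat.cast_pow, (ZMod.natCast_self 2 : ((2 : ℕ) : ZMod 2) = 0),
      zero_pow (by omega)]
  · rw [Icc_eq_empty (by simpa using hST), card_empty, Nat.cast_zero]

lemma anfCoeff_monomialFun (S T : Finset (Fin m)) :
    anfCoeff T (monomialFun S) = if S = T then 1 else 0 := by
  rw [← natCast_card_Icc_zmod_two, anfCoeff_apply]
  simp_rw [monomialFun_indicatorEquiv, sum_boole]
  congr 2
  ext U
  simp [and_comm]

lemma sum_anfCoeff_mul_monomialFun (v : (Fin m → ZMod 2) → ZMod 2) (x : Fin m → ZMod 2) :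
    ∑ T, anfCoeff T v * monomialFun T x = v x := by
  obtain ⟨X, rfl⟩ := (indicatorEquiv (Fin m)).surjective x
  calc ∑ T, anfCoeff T v * monomialFun T (indicatorEquiv _ X)
      = ∑ T, ∑ U, if U ⊆ T ∧ T ⊆ X then v (indicatorEquiv _ U) else 0 := by
        refine sum_congr rfl fun T _ => ?_
        by_cases hTX : T ⊆ X <;>
          simp [hTX, anfCoeff_apply, monomialFun_indicatorEquiv, ← sum_filter, filter_subset_univ]
    _ = ∑ U, ((#(Icc U X) : ℕ) : ZMod 2) * v (indicatorEquiv _ U) := by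
        rw [sum_comm]
        refine sum_congr rfl fun U _ => ?_
        rw [← sum_filter, sum_const, nsmul_eq_mul]
        congr 3
        ext T
        simp
    _ = v (indicatorEquiv _ X) := by simp [natCast_card_Icc_zmod_two]

lemma RM_eq_iInf_ker_anfCoeff (r m : ℕ) :
    RM r m = ⨅ (T : Finset (Fin m)) (_ : r < #T), LinearMap.ker (anfCoeff T) := by
  apply le_antisymm
  · rw [RM, Submodule.span_le]
    rintro _ ⟨S, hS, rfl⟩
    simp only [SetLike.mem_coe, Submodule.mem_iInf, LinearMap.mem_ker]
    intro T hT
    exact (anfCoeff_monomialFun S T).trans (if_neg (by rintro rfl; omega))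
  · intro v hv
    simp only [Submodule.mem_iInf, LinearMap.mem_ker] at hv
    have hv_eq : v = ∑ T, anfCoeff T v • monomialFun T := by
      funext x
      simp [Finset.sum_apply, sum_anfCoeff_mul_monomialFun]
    rw [hv_eq]
    refine Submodule.sum_mem _ fun T _ => ?_
    rcases le_or_gt #T r with hT | hT
    · exact Submodule.smul_mem _ _ (Submodule.subset_span ⟨T, hT, rfl⟩)
    · rw [hv T hT, zero_smul]
      exact Submodule.zero_mem _

lemma eq_univ_or_eq_erase_of_pred_le_card {T : Finset (Fin m)} (hT : m - 1 ≤ #T) :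
    T = univ ∨ ∃ j, T = univ.erase j := by
  by_cases h : T = univ
  · exact Or.inl h
  obtain ⟨j, hj⟩ : ∃ j, j ∉ T := by simpa [eq_univ_iff_forall] using h
  refine Or.inr ⟨j, eq_of_subset_of_card_le (fun i hi => mem_erase.mpr ⟨?_, mem_univ i⟩) ?_⟩
  · rintro rfl; exact hj hi
  · simpa using hT

def syndrome : ((Fin m → ZMod 2) → ZMod 2) →ₗ[ZMod 2] (Fin m → ZMod 2) :=
  Fintype.linearCombination (ZMod 2) id

lemma syndrome_apply (v : (Fin m → ZMod 2) → ZMod 2) (j : Fin m) :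
    syndrome v j = ∑ x, v x * x j := by
  simp [syndrome, Fintype.linearCombination_apply, Finset.sum_apply]

lemma anfCoeff_univ (v : (Fin m → ZMod 2) → ZMod 2) : anfCoeff univ v = ∑ x, v x := by
  rw [anfCoeff_apply, powerset_univ, (indicatorEquiv _).sum_comp]

lemma anfCoeff_univ_erase (v : (Fin m → ZMod 2) → ZMod 2) (j : Fin m) :
    anfCoeff (univ.erase j) v = ∑ x, v x - syndrome v j := by
  rw [eq_sub_iff_add_eq, anfCoeff_apply, syndrome_apply, ← (indicatorEquiv _).sum_comp,
    ← (indicatorEquiv _).sum_comp]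
  have hpow : (univ.erase j).powerset = ({U | j ∉ U} : Finset (Finset (Fin m))) := by
    ext U
    simp [subset_erase]
  simp [mul_ite, hpow, ← sum_filter, sum_filter_not_add_sum_filter]

lemma mem_RM_sub_two_iff (hm : 2 ≤ m) (v : (Fin m → ZMod 2) → ZMod 2) :
    v ∈ RM (m - 2) m ↔ ∑ x, v x = 0 ∧ syndrome v = 0 := by
  simp only [RM_eq_iInf_ker_anfCoeff, Submodule.mem_iInf, LinearMap.mem_ker]
  constructor
  · intro h
    have hsum : ∑ x, v x = 0 := anfCoeff_univ v ▸ h univ (by rw [card_fin]; omega)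
    refine ⟨hsum, funext fun j => ?_⟩
    have := h (univ.erase j) (by rw [card_erase_of_mem (mem_univ j), card_fin]; omega)
    rwa [anfCoeff_univ_erase, hsum, zero_sub, neg_eq_zero] at this
  · rintro ⟨hsum, hsyn⟩ T hT
    rcases eq_univ_or_eq_erase_of_pred_le_card (by omega : m - 1 ≤ #T) with rfl | ⟨j, rfl⟩
    · rw [anfCoeff_univ, hsum]
    · rw [anfCoeff_univ_erase, hsum, hsyn, Pi.zero_apply, sub_zero]

lemma exists_mem_RM_sub_two_add_monomialFun_erase_iff (hm : 2 ≤ m) (j : Fin m)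
    (v : (Fin m → ZMod 2) → ZMod 2) :
    (∃ c ∈ RM (m - 2) m, v = c + monomialFun (univ.erase j)) ↔
      ∑ x, v x = 0 ∧ syndrome v = Pi.single j 1 := by
  have hsum : ∑ x, monomialFun (univ.erase j) x = 0 := by
    rw [← anfCoeff_univ, anfCoeff_monomialFun, if_neg (by simp)]
  have hsyn : syndrome (monomialFun (univ.erase j)) = Pi.single j 1 := by
    funext i
    have := anfCoeff_univ_erase (monomialFun (univ.erase j)) i
    rw [anfCoeff_monomialFun, hsum, zero_sub, CharTwo.neg_eq] at this
    simp_rw [erase_inj _ (mem_univ j)] at this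
    simp only [← this, Pi.single_apply, eq_comm]
  have hcoset : (∃ c ∈ RM (m - 2) m, v = c + monomialFun (univ.erase j)) ↔
      v - monomialFun (univ.erase j) ∈ RM (m - 2) m :=
    ⟨fun ⟨c, hc, hv⟩ => by simpa [hv] using hc, fun h => ⟨_, h, (sub_add_cancel _ _).symm⟩⟩
  rw [hcoset, mem_RM_sub_two_iff hm, map_sub]
  simp only [Pi.sub_apply]
  rw [sum_sub_distrib, hsum, hsyn, sub_zero, sub_eq_zero]

lemma wtF_indicatorEquiv (S : Finset (Fin m → ZMod 2)) : wtF (indicatorEquiv _ S) = #S := by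
  simp [wtF]

lemma syndrome_indicatorEquiv (S : Finset (Fin m → ZMod 2)) :
    syndrome (indicatorEquiv _ S) = ∑ y ∈ S, y := by
  simp [syndrome, Fintype.linearCombination_apply, ite_smul]

lemma ncard_balanced_coset_eq (hm : 2 ≤ m) (j : Fin m) :
    {v | (∃ c ∈ RM (m - 2) m, v = c + monomialFun (univ.erase j)) ∧ wtF v = 2 ^ (m - 1)}.ncard =
      #{S ∈ powersetCard (2 ^ (m - 1)) (univ : Finset (Fin m → ZMod 2)) |
        ∑ y ∈ S, y = Pi.single j 1} := by
  rw [← card_map (indicatorEquiv _).toEmbedding, ← Set.ncard_coe_finset]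
  congr 1
  ext v
  obtain ⟨S, rfl⟩ := (indicatorEquiv _).surjective v
  simp only [Set.mem_ofPred_eq, coe_map, Equiv.coe_toEmbedding, Set.mem_image_equiv,
    Equiv.symm_apply_apply, coe_filter, mem_powersetCard_univ,
    exists_mem_RM_sub_two_add_monomialFun_erase_iff hm, sum_indicatorEquiv, wtF_indicatorEquiv,
    syndrome_indicatorEquiv]
  refine ⟨fun h => ⟨h.2, h.1.2⟩, fun h => ⟨⟨?_, h.2⟩, h.1⟩⟩
  -- a balanced word has even weight
  rw [h.1, Nat.cast_pow, Nat.cast_ofNat]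
  exact (pow_eq_zero_iff (by omega)).mpr (by decide)

section Counting

open Polynomial

def signChar : AddChar (ZMod 2) ℤ where
  toFun u := if u = 0 then 1 else -1
  map_zero_eq_one' := rfl
  map_add_eq_mul' := by decide

lemma signChar_apply (u : ZMod 2) : signChar u = if u = 0 then 1 else -1 := rfl

lemma _root_.AddChar.map_sum_eq_prod {A M ι : Type*} [AddCommMonoid A] [CommMonoid M]
    (ψ : AddChar A M) (s : Finset ι) (f : ι → A) : ψ (∑ i ∈ s, f i) = ∏ i ∈ s, ψ (f i) := by
  classical
  induction s using Finset.induction_on with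
  | empty => simp
  | insert a s ha ih => rw [sum_insert ha, prod_insert ha, AddChar.map_add_eq_mul, ih]

variable {ι : Type*} [Fintype ι]

def dotChar (a : ι → ZMod 2) : AddChar (ι → ZMod 2) ℤ :=
  signChar.compAddMonoidHom (AddMonoidHom.mk' (a ⬝ᵥ ·) (dotProduct_add a))

lemma dotChar_apply (a y : ι → ZMod 2) : dotChar a y = signChar (a ⬝ᵥ y) := rfl

lemma dotChar_comm (a y : ι → ZMod 2) : dotChar a y = dotChar y a := by
  rw [dotChar_apply, dotChar_apply, dotProduct_comm]

lemma dotChar_eq_zero_iff {a : ι → ZMod 2} : dotChar a = 0 ↔ a = 0 := by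
  rw [← dotProduct_eq_zero_iff, AddChar.eq_zero_iff]
  simp [dotChar_apply, signChar_apply]

lemma sum_dotChar [DecidableEq ι] (a : ι → ZMod 2) :
    ∑ y, dotChar a y = if a = 0 then 2 ^ Fintype.card ι else 0 := by
  split_ifs with ha
  · simp [ha, dotChar_apply]
  · exact AddChar.sum_eq_zero_iff_ne_zero.mpr (dotChar_eq_zero_iff.not.mpr ha)

lemma card_filter_dotProduct_eq_zero_eq_card_filter_ne [DecidableEq ι] {a : ι → ZMod 2}
    (ha : a ≠ 0) : #{y | a ⬝ᵥ y = 0} = #{y | a ⬝ᵥ y ≠ 0} := by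
  have hsum := sum_dotChar a
  simp only [if_neg ha, dotChar_apply, signChar_apply] at hsum
  rw [sum_ite, sum_const, sum_const, smul_neg, nsmul_one, nsmul_one, add_neg_eq_zero] at hsum
  exact_mod_cast hsum

lemma card_filter_dotProduct_eq_zero [DecidableEq ι] {a : ι → ZMod 2} (ha : a ≠ 0) :
    #{y | a ⬝ᵥ y = 0} = 2 ^ (Fintype.card ι - 1) := by
  obtain ⟨i, -⟩ := Function.ne_iff.mp ha
  have hpow : 2 ^ Fintype.card ι = 2 * 2 ^ (Fintype.card ι - 1) := by
    rw [← pow_succ', Nat.sub_add_cancel (Fintype.card_pos_iff.mpr ⟨i⟩)]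
  have hcard := card_filter_add_card_filter_not (s := (univ : Finset (ι → ZMod 2)))
    (fun y => a ⬝ᵥ y = 0)
  rw [← card_filter_dotProduct_eq_zero_eq_card_filter_ne ha, card_univ, Fintype.card_fun,
    ZMod.card] at hcard
  omega

lemma prod_X_add_C_dotChar [DecidableEq ι] {a : ι → ZMod 2} (ha : a ≠ 0) :
    ∏ y, (X + C (dotChar a y)) = (X ^ 2 - 1) ^ 2 ^ (Fintype.card ι - 1) := by
  simp only [dotChar_apply, signChar_apply, apply_ite C, map_one, map_neg, add_ite]
  rw [prod_ite, prod_const, prod_const, ← card_filter_dotProduct_eq_zero_eq_card_filter_ne ha,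
    card_filter_dotProduct_eq_zero ha, ← mul_pow]
  ring

lemma sum_powersetCard_prod_dotChar [DecidableEq ι] {a : ι → ZMod 2} (ha : a ≠ 0) {k : ℕ}
    (hk : k ≤ 2 ^ Fintype.card ι) :
    ∑ S ∈ powersetCard k univ, ∏ y ∈ S, dotChar a y =
      ((X ^ 2 - 1 : ℤ[X]) ^ 2 ^ (Fintype.card ι - 1)).coeff (2 ^ Fintype.card ι - k) := by
  have hcard : #(univ : Finset (ι → ZMod 2)) = 2 ^ Fintype.card ι := by simp
  rw [← prod_X_add_C_dotChar ha, prod_X_add_C_coeff _ _ (by omega), hcard, Nat.sub_sub_self hk]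

lemma two_pow_mul_card_filter_sum_eq [DecidableEq ι] {u : ι → ZMod 2} (hu : u ≠ 0) {k : ℕ}
    (hk : k ≤ 2 ^ Fintype.card ι) :
    (2 ^ Fintype.card ι : ℤ) *
        #{S ∈ powersetCard k (univ : Finset (ι → ZMod 2)) | ∑ y ∈ S, y = u} =
      (2 ^ Fintype.card ι).choose k -
        ((X ^ 2 - 1 : ℤ[X]) ^ 2 ^ (Fintype.card ι - 1)).coeff (2 ^ Fintype.card ι - k) := by
  generalize hD :
    ((X ^ 2 - 1 : ℤ[X]) ^ 2 ^ (Fintype.card ι - 1)).coeff (2 ^ Fintype.card ι - k) = D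
  have hdetect (S : Finset (ι → ZMod 2)) :
      ∑ a, dotChar a (∑ y ∈ S, y + u) = if ∑ y ∈ S, y = u then 2 ^ Fintype.card ι else 0 := by
    have hneg : -u = u := funext fun i => ZMod.neg_eq_self_mod_two (u i)
    rw [sum_congr rfl fun a _ => dotChar_comm a _, sum_dotChar]
    simp only [add_eq_zero_iff_eq_neg, hneg]
  have hfactor (a : ι → ZMod 2) :
      ∑ S ∈ powersetCard k univ, dotChar a (∑ y ∈ S, y + u) =
        dotChar a u * ∑ S ∈ powersetCard k univ, ∏ y ∈ S, dotChar a y := by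
    rw [mul_sum]
    refine sum_congr rfl fun S _ => ?_
    rw [AddChar.map_add_eq_mul, AddChar.map_sum_eq_prod, mul_comm]
  have hzero : dotChar (0 : ι → ZMod 2) = 0 := dotChar_eq_zero_iff.mpr rfl
  calc (2 ^ Fintype.card ι : ℤ) * #{S ∈ powersetCard k univ | ∑ y ∈ S, y = u}
    _ = ∑ S ∈ powersetCard k univ, ∑ a, dotChar a (∑ y ∈ S, y + u) := by
        simp_rw [hdetect, ← sum_filter, sum_const, nsmul_eq_mul, mul_comm]
    _ = ∑ a, dotChar a u * ∑ S ∈ powersetCard k univ, ∏ y ∈ S, dotChar a y := by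
        rw [sum_comm]
        simp_rw [hfactor]
    _ = (2 ^ Fintype.card ι).choose k + (∑ a ∈ univ.erase 0, dotChar a u) * D := by
        rw [← add_sum_erase _ _ (mem_univ 0), sum_mul]
        congr 1
        · simp [hzero]
        · exact sum_congr rfl fun a ha => by
            rw [sum_powersetCard_prod_dotChar (ne_of_mem_erase ha) hk, hD]
    _ = _ := by
        rw [sum_erase_eq_sub (mem_univ 0), sum_congr rfl fun a _ => dotChar_comm a u,
          sum_dotChar, if_neg hu, hzero, AddChar.zero_apply]
        ring

lemma coeff_X_sq_sub_one_pow {R : Type*} [CommRing R] (n i : ℕ) :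
    ((X ^ 2 - 1 : R[X]) ^ n).coeff (2 * i) = (-1) ^ (n - i) * n.choose i := by
  have hexpand : (X ^ 2 - 1 : R[X]) ^ n = expand R 2 ((X + C (-1)) ^ n) := by
    simp [sub_eq_add_neg]
  rw [hexpand, coeff_expand two_pos, if_pos (dvd_mul_right 2 i),
    Nat.mul_div_cancel_left _ two_pos, coeff_X_add_C_pow]

lemma two_pow_mul_card_filter_sum_eq_of_three_le (hm : 3 ≤ m) {u : Fin m → ZMod 2}
    (hu : u ≠ 0) :
    (2 ^ m : ℤ) *
        #{S ∈ powersetCard (2 ^ (m - 1)) (univ : Finset (Fin m → ZMod 2)) | ∑ y ∈ S, y = u} =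
      (2 ^ m).choose (2 ^ (m - 1)) - (2 ^ (m - 1)).choose (2 ^ (m - 2)) := by
  have hm1 : 2 ^ m = 2 * 2 ^ (m - 1) := by rw [← pow_succ']; congr 1; omega
  have hm2 : 2 ^ (m - 1) = 2 * 2 ^ (m - 2) := by rw [← pow_succ']; congr 1; omega
  have heven : Even (2 ^ (m - 2)) := Nat.even_pow.mpr ⟨even_two, by omega⟩
  have h := two_pow_mul_card_filter_sum_eq hu (k := 2 ^ (m - 1)) (by rw [Fintype.card_fin]; omega)
  rwa [Fintype.card_fin, show 2 ^ m - 2 ^ (m - 1) = 2 * 2 ^ (m - 2) by omega,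
    coeff_X_sq_sub_one_pow, show 2 ^ (m - 1) - 2 ^ (m - 2) = 2 ^ (m - 2) by omega,
    heven.neg_one_pow, one_mul] at h

end Counting

end ReedMuller

open ReedMuller Finset in
theorem extended_hamming_coset_balanced_count (m : ℕ) (hm : 3 ≤ m)
    (a₁ : (Fin m → ZMod 2) → ZMod 2)
    (ha₁ : a₁ = fun x => ∏ i ∈ Finset.univ.filter (fun i : Fin m => (i : ℕ) < m - 1), x i) :
    (({v | (∃ c ∈ RM (m - 2) m, v = c + a₁) ∧ wtF v = 2 ^ (m - 1)}.ncard : ℚ)) =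
      (1 / (2 ^ m : ℚ)) *
        ((Nat.choose (2 ^ m) (2 ^ m / 2) : ℚ) - (Nat.choose (2 ^ m / 2) (2 ^ m / 4) : ℚ)) := by
  let j : Fin m := ⟨m - 1, by omega⟩
  have ha : a₁ = monomialFun (univ.erase j) := by
    have hS : univ.filter (fun i : Fin m => (i : ℕ) < m - 1) = univ.erase j := by
      ext i
      simp only [mem_filter, mem_univ, true_and, mem_erase, ne_eq, Fin.ext_iff, and_true, j]
      omega
    rw [ha₁, hS]
    rfl
  have hhalf : 2 ^ m / 2 = 2 ^ (m - 1) := by rw [← Nat.pow_div (by omega) two_pos, pow_one]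
  have hquarter : 2 ^ m / 4 = 2 ^ (m - 2) := by
    rw [← Nat.pow_div (by omega) two_pos]; norm_num
  have hcount := two_pow_mul_card_filter_sum_eq_of_three_le hm
    (Pi.single_ne_zero_iff.mpr one_ne_zero : Pi.single j (1 : ZMod 2) ≠ 0)
  qify at hcount
  rw [ha, ncard_balanced_coset_eq (by omega) j, hhalf, hquarter, ← hcount]
  field_simp
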